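/- arXiv:1206.6227 — 8 statements merged into one kernel-verified Lean document; each statement's English description precedes it below -/
import Mathlib

section
/- For a measurable space (S, 𝒮), the diagonal Δ = {(x,x) : x ∈ S} belongs to the product σ-field 𝒮 ⊗ 𝒮 if and only if there is a countable collection ℰ ⊆ 𝒮 separating points of S (i.e., for any two distinct x, y ∈ S there is A ∈ ℰ with x ∈ A, y ∉ A or vice versa). -/
/-! A measurable set of a product σ-algebra already lies in the σ-algebra generated by countably
many measurable rectangles. So if the diagonal is measurable, it is measurable for `m₀ ⊗ m₀`, where
`m₀ ≤ 𝒮` is generated by the countably many sides of these rectangles; then the singletons are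
`m₀`-measurable, so `m₀` separates points, and hence so does its countable generating family.
Conversely, a countable separating family `(Aₙ)` gives a measurable injection
`x ↦ (1_{Aₙ}(x))ₙ` into the Cantor space `ℕ → Bool`, and the diagonal of `S` is the preimage of
the (closed, hence measurable) diagonal of the Cantor space. -/

open Set MeasurableSpace MeasureTheory

theorem hasCountableSeparatingOn_univ_iff {α : Type*} {p : Set α → Prop} :
    HasCountableSeparatingOn α p univ ↔ ∃ E : Set (Set α), E.Countable ∧ (∀ A ∈ E, p A) ∧
      ∀ x y : α, x ≠ y → ∃ A ∈ E, (x ∈ A ∧ y ∉ A) ∨ (y ∈ A ∧ x ∉ A) := by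
  refine ⟨fun ⟨h⟩ => ?_, fun h => ⟨?_⟩⟩ <;> refine h.imp fun E => .imp_right <| .imp_right ?_
  · intro hsep x y hxy
    contrapose! hxy
    exact hsep x trivial y trivial fun A hA => ⟨(hxy A hA).1, (hxy A hA).2⟩
  · intro hsep x _ y _ hxy
    by_contra hne
    obtain ⟨A, hA, hxA⟩ := hsep x y hne
    have := hxy A hA
    tauto

namespace MeasurableSpace

variable {α β : Type*}

theorem exists_countable_subset_measurableSet_generateFrom {C : Set (Set α)} {s : Set α}
    (hs : MeasurableSet[generateFrom C] s) :
    ∃ D ⊆ C, D.Countable ∧ MeasurableSet[generateFrom D] s := by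
  induction s, hs using generateFrom_induction with
  | hC t ht _ => exact ⟨{t}, singleton_subset_iff.2 ht, countable_singleton t, .basic t rfl⟩
  | empty => exact ⟨∅, empty_subset C, countable_empty, @MeasurableSet.empty _ (generateFrom ∅)⟩
  | compl t _ ih =>
    obtain ⟨D, hDC, hD, ht⟩ := ih
    exact ⟨D, hDC, hD, ht.compl⟩
  | iUnion t _ ih =>
    choose D hDC hD ht using ih
    exact ⟨⋃ n, D n, iUnion_subset hDC, countable_iUnion hD,
      .iUnion fun n => generateFrom_mono (subset_iUnion D n) _ (ht n)⟩

theorem countablyGenerated_generateFrom {C : Set (Set α)} (hC : C.Countable) :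
    @CountablyGenerated α (generateFrom C) :=
  @CountablyGenerated.mk _ (generateFrom C) ⟨C, hC, rfl⟩

theorem prod_mono {m₁ m₁' : MeasurableSpace α} {m₂ m₂' : MeasurableSpace β} (h₁ : m₁ ≤ m₁')
    (h₂ : m₂ ≤ m₂') : m₁.prod m₂ ≤ m₁'.prod m₂' :=
  sup_le_sup (comap_mono h₁) (comap_mono h₂)

theorem exists_countablyGenerated_le_measurableSet_prod [mα : MeasurableSpace α]
    [mβ : MeasurableSpace β] {s : Set (α × β)} (hs : MeasurableSet s) :
    ∃ m₁ ≤ mα, ∃ m₂ ≤ mβ, @CountablyGenerated α m₁ ∧ @CountablyGenerated β m₂ ∧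
      MeasurableSet[m₁.prod m₂] s := by
  rw [← generateFrom_prod] at hs
  obtain ⟨D, hDC, hD, hsD⟩ := exists_countable_subset_measurableSet_generateFrom hs
  choose! t ht u hu htu using fun d (hd : d ∈ D) => hDC hd
  refine ⟨generateFrom (t '' D), generateFrom_le (forall_mem_image.2 ht),
    generateFrom (u '' D), generateFrom_le (forall_mem_image.2 hu),
    countablyGenerated_generateFrom (hD.image t),
    countablyGenerated_generateFrom (hD.image u), generateFrom_le (fun d hd => ?_) s hsD⟩
  rw [← htu d hd]
  exact MeasurableSet.prod (m := generateFrom (t '' D)) (mβ := generateFrom (u '' D))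
    (.basic _ (mem_image_of_mem t hd)) (.basic _ (mem_image_of_mem u hd))

theorem measurableEq_iff_countablySeparated [MeasurableSpace α] :
    MeasurableEq α ↔ CountablySeparated α := by
  constructor
  · rintro ⟨hdiag⟩
    obtain ⟨m₁, hm₁, m₂, hm₂, hcg₁, hcg₂, hdiag'⟩ :=
      exists_countablyGenerated_le_measurableSet_prod hdiag
    let m' := m₁ ⊔ m₂
    have : @CountablyGenerated α m' := hcg₁.sup hcg₂
    have : @MeasurableEq α m' := ⟨prod_mono le_sup_left le_sup_right _ hdiag'⟩
    exact CountablySeparated.mono (m := m') (sup_le hm₁ hm₂)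
  · intro _
    obtain ⟨f, hf, hinj⟩ := measurable_injection_nat_bool_of_countablySeparated α
    have hdiag : {p : α × α | f p.1 = f p.2} = diagonal α := by
      ext p
      exact hinj.eq_iff
    exact ⟨hdiag ▸ measurableSet_eq_fun (hf.comp measurable_fst) (hf.comp measurable_snd)⟩

end MeasurableSpace

theorem diagonal_measurable_iff_countable_separating
    {S : Type*} [MeasurableSpace S] :
    MeasurableSet {p : S × S | p.1 = p.2} ↔
      ∃ E : Set (Set S), E.Countable ∧ (∀ A ∈ E, MeasurableSet A) ∧
        ∀ x y : S, x ≠ y → ∃ A ∈ E, (x ∈ A ∧ y ∉ A) ∨ (y ∈ A ∧ x ∉ A) := by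
  rw [← hasCountableSeparatingOn_univ_iff, ← countablySeparated_def,
    ← measurableEq_iff_countablySeparated]
  exact ⟨fun h => ⟨h⟩, fun h => h.1⟩
end

section
/- Let (A_{n,k}, k ∈ I_n)_{n∈ℕ} be a dissecting system for a subset A of S. Then for every countable subset M of S, the number of points of M in A satisfies |M ∩ A| = lim_{n→∞} Σ_{k ∈ I_n} 1_{{M ∩ A_{n,k} ≠ ∅}}, where the limit is in ℕ₀ ∪ {∞}. -/
open MeasureTheory Filter

/-- The space of countable subsets of `S`. -/
def CS (S : Type*) : Type _ := {M : Set S // M.Countable}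

/-- The counting map `N_A : C(S) → ℕ₀ ∪ {∞}`, `M ↦ |M ∩ A|`. -/
noncomputable def NA {S : Type*} (A : Set S) (M : CS S) : ℕ∞ := (M.1 ∩ A).encard

/-- The counting σ-field `𝒞(𝒯)` on `C(S)`: the smallest σ-field making every
`N_A`, `A ∈ 𝒯`, measurable. -/
noncomputable def countingSigma {S : Type*} (T : Set (Set S)) : MeasurableSpace (CS S) :=
  ⨆ A ∈ T, MeasurableSpace.comap (NA A) ⊤

/-- The hit-or-miss σ-field `𝔥(ℰ)` on `C(S)`. -/
def hitOrMiss {S : Type*} (E : Set (Set S)) : MeasurableSpace (CS S) :=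
  MeasurableSpace.generateFrom ((fun A => {M : CS S | (M.1 ∩ A).Nonempty}) '' E)

/-- The counting σ-field `𝒞(𝒮)` of the full σ-field of the state space. -/
noncomputable def countingSigmaField (S : Type*) [MeasurableSpace S] : MeasurableSpace (CS S) :=
  countingSigma {A : Set S | MeasurableSet A}

/-- A dissecting system for `A ⊆ S` (Leadbetter): nested partitions of increasing
subsets exhausting `A` that eventually separate any two distinct points of `A`. -/
def IsDissectingSystem {S : Type*} (A : Set S) (I : ℕ → Set ℕ) (B : ℕ → ℕ → Set S) : Prop :=
  (∀ n, ∀ k ∈ I n, B n k ⊆ A) ∧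
  (∀ n, (I n).PairwiseDisjoint (B n)) ∧
  (∀ n, (⋃ k ∈ I n, B n k) ⊆ ⋃ k ∈ I (n + 1), B (n + 1) k) ∧
  ((⋃ n, ⋃ k ∈ I n, B n k) = A) ∧
  (∀ x ∈ A, ∀ y ∈ A, x ≠ y →
    ∃ N, ∀ n ≥ N, ∃ k ∈ I n, Xor' (x ∈ B n k) (y ∈ B n k))

/-- A family `ℰ` is self-dissecting if every `A ∈ ℰ` admits a dissecting system
consisting of sets from `ℰ`. -/
def SelfDissecting {S : Type*} (E : Set (Set S)) : Prop :=
  E.Nonempty ∧ ∀ A ∈ E, ∃ I B, IsDissectingSystem A I B ∧ ∀ n, ∀ k ∈ I n, B n k ∈ E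

/-! The `n`-th sum is the number of level-`n` blocks that meet `M`. The blocks are disjoint
subsets of `A`, so picking a point of `M` in each of them shows that this number never exceeds
`|M ∩ A|`. Conversely, a finite `F ⊆ M ∩ A` is eventually covered by the blocks, with no two of
its points in a common block, so from then on the number is at least `|F|`; since `F` is an
arbitrary finite subset, the numbers converge to `|M ∩ A|` in `ℕ∞`. -/

namespace ENat

theorem summable {ι : Type*} (f : ι → ℕ∞) : Summable f :=
  (hasSum_of_isLUB _ isLUB_iSup).summable

theorem tsum_one (α : Type*) : ∑' _ : α, (1 : ℕ∞) = ENat.card α := by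
  rcases finite_or_infinite α with hα | hα
  · have := Fintype.ofFinite α
    simp [tsum_fintype]
  · rw [ENat.card_eq_top_of_infinite]
    refine ENat.eq_top_iff_forall_ge.2 fun m => ?_
    obtain ⟨t, ht⟩ := Infinite.exists_subset_card_eq α m
    calc (m : ℕ∞) = ∑ _ ∈ t, 1 := by simp [ht]
      _ ≤ ∑' _ : α, 1 := (summable _).sum_le_tsum t fun _ _ => zero_le

theorem tsum_subtype_ite_eq_encard {ι : Type*} (s : Set ι) (P : ι → Prop) [DecidablePred P] :
    ∑' k : s, (if P k then 1 else 0 : ℕ∞) = {k ∈ s | P k}.encard :=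
  calc ∑' k : s, (if P k then 1 else 0 : ℕ∞)
      = ∑' k : s, {k : s | P k}.indicator 1 k := by simp [Set.indicator_apply]
    _ = ∑' _ : {k : s | P k}, 1 := (tsum_subtype _ _).symm
    _ = {k ∈ s | P k}.encard :=
      (tsum_one _).trans (ENat.card_congr (Equiv.subtypeSubtypeEquivSubtypeInter _ P))

end ENat

theorem tendsto_encard_of_le_of_eventually_ge {ι α : Type*} {l : Filter ι} {f : ι → ℕ∞}
    {s : Set α} (hle : ∀ i, f i ≤ s.encard)
    (hge : ∀ t ⊆ s, t.Finite → ∀ᶠ i in l, t.encard ≤ f i) :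
    Tendsto f l (nhds s.encard) := by
  refine tendsto_order.2 ⟨fun a ha => ?_, fun a ha => .of_forall fun i => (hle i).trans_lt ha⟩
  obtain ⟨t, hts, ht⟩ := Set.exists_subset_encard_eq ((ENat.add_one_le_iff ha.ne_top).2 ha)
  have htfin : t.Finite :=
    Set.encard_ne_top_iff.1 (ht ▸ WithTop.add_ne_top.2 ⟨ha.ne_top, ENat.one_ne_top⟩)
  exact (hge t hts htfin).mono fun i hi => (ENat.add_one_le_iff ha.ne_top).1 (ht ▸ hi)

section Blocks

variable {ι α : Type*} {I : Set ι} {B : ι → Set α} {M : Set α}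

theorem encard_blocks_meeting_le {A : Set α} (hBA : ∀ k ∈ I, B k ⊆ A)
    (hB : I.PairwiseDisjoint B) : {k ∈ I | (M ∩ B k).Nonempty}.encard ≤ (M ∩ A).encard := by
  let x (k : {k ∈ I | (M ∩ B k).Nonempty}) : ↥(M ∩ A) :=
    ⟨k.2.2.some, k.2.2.some_mem.1, hBA k k.2.1 k.2.2.some_mem.2⟩
  refine ENat.card_le_card_of_injective (f := x) fun k j hkj => Subtype.ext ?_
  have hkj : k.2.2.some = j.2.2.some := congrArg Subtype.val hkj
  exact hB.elim_set k.2.1 j.2.1 _ k.2.2.some_mem.2 (hkj ▸ j.2.2.some_mem.2)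

theorem encard_le_encard_blocks_meeting {F : Set α} (hFM : F ⊆ M)
    (hcov : ∀ x ∈ F, ∃ k ∈ I, x ∈ B k)
    (hsep : ∀ x ∈ F, ∀ y ∈ F, ∀ k ∈ I, x ∈ B k → y ∈ B k → x = y) :
    F.encard ≤ {k ∈ I | (M ∩ B k).Nonempty}.encard := by
  choose c hcI hcB using hcov
  let block (x : F) : {k ∈ I | (M ∩ B k).Nonempty} :=
    ⟨c x x.2, hcI x x.2, x, hFM x.2, hcB x x.2⟩
  refine ENat.card_le_card_of_injective (f := block) fun x y hxy => Subtype.ext ?_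
  have hxy : c x x.2 = c y y.2 := congrArg Subtype.val hxy
  exact hsep x x.2 y y.2 _ (hcI x x.2) (hcB x x.2) (hxy ▸ hcB y y.2)

end Blocks

namespace IsDissectingSystem

variable {S : Type*} {A : Set S} {I : ℕ → Set ℕ} {B : ℕ → ℕ → Set S} {x y : S}

theorem monotone_biUnion (h : IsDissectingSystem A I B) :
    Monotone fun n => ⋃ k ∈ I n, B n k :=
  monotone_nat_of_le_succ h.2.2.1

theorem eventually_mem (h : IsDissectingSystem A I B) (hx : x ∈ A) :
    ∀ᶠ n in atTop, ∃ k ∈ I n, x ∈ B n k := by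
  rw [← h.2.2.2.1, Set.mem_iUnion] at hx
  obtain ⟨N, hN⟩ := hx
  exact eventually_atTop.2 ⟨N, fun n hn => by simpa using h.monotone_biUnion hn hN⟩

theorem eventually_eq_of_mem_of_mem (h : IsDissectingSystem A I B) (hx : x ∈ A) (hy : y ∈ A) :
    ∀ᶠ n in atTop, ∀ k ∈ I n, x ∈ B n k → y ∈ B n k → x = y := by
  by_cases hxy : x = y
  · exact .of_forall fun _ _ _ _ _ => hxy
  obtain ⟨N, hN⟩ := h.2.2.2.2 x hx y hy hxy
  filter_upwards [eventually_ge_atTop N] with n hn k hk hxk hyk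
  obtain ⟨j, hj, ⟨hxj, hyj⟩ | ⟨hyj, hxj⟩⟩ := hN n hn
  · exact absurd ((h.2.1 n).elim_set hj hk x hxj hxk ▸ hyk) hyj
  · exact absurd ((h.2.1 n).elim_set hj hk y hyj hyk ▸ hxk) hxj

end IsDissectingSystem

open scoped Classical in
theorem count_eq_lim_of_dissecting_general {S : Type*} (A : Set S) (I : ℕ → Set ℕ)
    (B : ℕ → ℕ → Set S) (h : IsDissectingSystem A I B)
    (M : Set S) :
    Tendsto (fun n => ∑' k : I n, (if (M ∩ B n k).Nonempty then 1 else 0 : ℕ∞))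
      atTop (nhds ((M ∩ A).encard)) := by
  have hcount n := ENat.tsum_subtype_ite_eq_encard (I n) fun k => (M ∩ B n k).Nonempty
  simp only [hcount]
  refine tendsto_encard_of_le_of_eventually_ge
    (fun n => encard_blocks_meeting_le (h.1 n) (h.2.1 n)) fun F hF hFfin => ?_
  have hcov : ∀ᶠ n in atTop, ∀ x ∈ F, ∃ k ∈ I n, x ∈ B n k :=
    hFfin.eventually_all.2 fun x hx => h.eventually_mem (hF hx).2
  have hsep : ∀ᶠ n in atTop, ∀ x ∈ F, ∀ y ∈ F, ∀ k ∈ I n, x ∈ B n k → y ∈ B n k → x = y :=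
    hFfin.eventually_all.2 fun x hx => hFfin.eventually_all.2 fun y hy =>
      h.eventually_eq_of_mem_of_mem (hF hx).2 (hF hy).2
  filter_upwards [hcov, hsep] with n hcov hsep
  exact encard_le_encard_blocks_meeting (fun x hx => (hF hx).1) hcov hsep

open scoped Classical in
theorem count_eq_lim_of_dissecting {S : Type*} (A : Set S) (I : ℕ → Set ℕ)
    (B : ℕ → ℕ → Set S) (h : IsDissectingSystem A I B)
    (M : Set S) (hM : M.Countable) :
    Tendsto (fun n => ∑' k : I n, (if (M ∩ B n k).Nonempty then 1 else 0 : ℕ∞))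
      atTop (nhds ((M ∩ A).encard)) :=
  count_eq_lim_of_dissecting_general A I B h M
end

section
/- Let ℋ be a semiring of subsets of S. If there exists a countable collection ℰ ⊆ ℋ separating points of S, then ℋ is self-dissecting: every A ∈ ℋ admits a dissecting system all of whose members lie in ℋ. -/
open Set

theorem Set.Countable.exists_bijOn_nat {α : Type*} [Nonempty α] {s : Set α} (hs : s.Countable) :
    ∃ (I : Set ℕ) (B : ℕ → α), BijOn B I s := by
  obtain ⟨f, hf⟩ := countable_iff_exists_injOn.mp hs
  exact ⟨f '' s, Function.invFunOn f s,
    BijOn.symm hf.bijOn_image.invOn_invFunOn.symm hf.bijOn_image⟩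

theorem Set.not_xor_mem_of_subset_or_disjoint {α : Type*} {R C : Set α} {x y : α} (hx : x ∈ R)
    (hy : y ∈ R) (h : R ⊆ C ∨ Disjoint R C) : ¬Xor' (x ∈ C) (y ∈ C) := by
  rcases h with h | h
  · simp [Xor', h hx, h hy]
  · simp [Xor', h.notMem_of_mem_left hx, h.notMem_of_mem_left hy]

theorem isDissectingSystem_of_bijOn {S : Type*} {A : Set S} {I : ℕ → Set ℕ} {B : ℕ → ℕ → Set S}
    {P : ℕ → Set (Set S)} (hB : ∀ n, BijOn (B n) (I n) (P n))
    (hdisj : ∀ n, (P n).PairwiseDisjoint id) (hcover : ∀ n, ⋃₀ P n = A)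
    (hsep : ∀ x ∈ A, ∀ y ∈ A, x ≠ y → ∃ N, ∀ n ≥ N, ∀ R ∈ P n, x ∈ R → y ∉ R) :
    IsDissectingSystem A I B := by
  have hU : ∀ n, ⋃ k ∈ I n, B n k = A := fun n => by
    rw [← hcover n, ← (hB n).image_eq, sUnion_image]
  refine ⟨fun n k hk => ?_, fun n => ?_, fun n => by rw [hU, hU], by simp only [hU, iUnion_const],
    ?_⟩
  · rw [← hU n]; exact subset_biUnion_of_mem hk
  · have h := (hB n).injOn.pairwiseDisjoint_image (f := id)
    rw [(hB n).image_eq] at h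
    exact h.mp (hdisj n)
  · intro x hx y hy hxy
    obtain ⟨N, hN⟩ := hsep x hx y hy hxy
    refine ⟨N, fun n hn => ?_⟩
    obtain ⟨k, hk, hxk⟩ := mem_iUnion₂.mp ((hU n).symm ▸ hx)
    exact ⟨k, hk, Or.inl ⟨hxk, hN n hn _ ((hB n).mapsTo hk) hxk⟩⟩

structure IsFinitePartitionIn {S : Type*} (H : Set (Set S)) (A : Set S) (P : Set (Set S)) :
    Prop where
  finite : P.Finite
  subset : P ⊆ H
  pairwiseDisjoint : P.PairwiseDisjoint id
  sUnion_eq : ⋃₀ P = A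

namespace MeasureTheory.IsSetSemiring

variable {S : Type*} {H : Set (Set S)} {A C : Set S}

theorem exists_isFinitePartitionIn_subset_or_disjoint (hH : IsSetSemiring H) (hA : A ∈ H)
    (hC : C ∈ H) : ∃ P, IsFinitePartitionIn H A P ∧ ∀ R ∈ P, R ⊆ C ∨ Disjoint R C := by
  have hAC : A ∩ C ∈ H := hH.inter_mem A hA C hC
  refine ⟨insert (A ∩ C) (hH.disjointOfDiff hA hAC), ⟨(Finset.finite_toSet _).insert _,
    insert_subset hAC (hH.subset_disjointOfDiff hA hAC),
    hH.pairwiseDisjoint_insert_disjointOfDiff hA hAC,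
    hH.sUnion_insert_disjointOfDiff hA hAC inter_subset_left⟩, ?_⟩
  rintro R (rfl | hR)
  · exact Or.inl inter_subset_right
  · have hR : R ⊆ A \ (A ∩ C) := hH.sUnion_disjointOfDiff hA hAC ▸ subset_sUnion_of_mem hR
    exact Or.inr (disjoint_sdiff_left.mono_left (hR.trans_eq sdiff_self_inter))

theorem exists_refinement_subset_or_disjoint (hH : IsSetSemiring H) {P : Set (Set S)}
    (hP : IsFinitePartitionIn H A P) (hC : C ∈ H) :
    ∃ P', IsFinitePartitionIn H A P' ∧ ∀ R ∈ P', (∃ Q ∈ P, R ⊆ Q) ∧ (R ⊆ C ∨ Disjoint R C) := by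
  obtain ⟨hPfin, hPH, hPdisj, hPA⟩ := hP
  choose! g hg hgC using fun Q (hQ : Q ∈ P) =>
    hH.exists_isFinitePartitionIn_subset_or_disjoint (hPH hQ) hC
  refine ⟨⋃ Q ∈ P, g Q, ⟨hPfin.biUnion fun Q hQ => (hg Q hQ).finite,
    iUnion₂_subset fun Q hQ => (hg Q hQ).subset,
    PairwiseDisjoint.biUnion ?_ fun Q hQ => (hg Q hQ).pairwiseDisjoint, ?_⟩, ?_⟩
  · intro Q hQ Q' hQ' hne
    change Disjoint (⋃ R ∈ g Q, R) (⋃ R ∈ g Q', R)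
    rw [← sUnion_eq_biUnion, ← sUnion_eq_biUnion, (hg Q hQ).sUnion_eq, (hg Q' hQ').sUnion_eq]
    exact hPdisj hQ hQ' hne
  · simp only [sUnion_iUnion]
    rw [← hPA, sUnion_eq_biUnion]
    exact iUnion₂_congr fun Q hQ => (hg Q hQ).sUnion_eq
  · simp only [mem_iUnion₂]
    rintro R ⟨Q, hQ, hR⟩
    exact ⟨⟨Q, hQ, (hg Q hQ).sUnion_eq ▸ subset_sUnion_of_mem hR⟩, hgC Q hQ R hR⟩

theorem exists_isFinitePartitionIn_forall_lt_subset_or_disjoint (hH : IsSetSemiring H)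
    {e : ℕ → Set S} (he : ∀ m, e m ∈ H) (hA : A ∈ H) (n : ℕ) :
    ∃ P, IsFinitePartitionIn H A P ∧ ∀ R ∈ P, ∀ m < n, R ⊆ e m ∨ Disjoint R (e m) := by
  induction n with
  | zero =>
    exact ⟨{A}, ⟨finite_singleton A, singleton_subset_iff.mpr hA, pairwiseDisjoint_singleton _ _,
      sUnion_singleton A⟩, fun _ _ m hm => absurd hm m.not_lt_zero⟩
  | succ n ih =>
    obtain ⟨P, hP, hPe⟩ := ih
    obtain ⟨P', hP', hP'e⟩ := hH.exists_refinement_subset_or_disjoint hP (he n)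
    refine ⟨P', hP', fun R hR m hm => ?_⟩
    obtain ⟨⟨Q, hQ, hRQ⟩, hRn⟩ := hP'e R hR
    rcases Nat.lt_succ_iff_lt_or_eq.mp hm with hm | rfl
    · exact (hPe Q hQ m hm).imp hRQ.trans (Disjoint.mono_left hRQ)
    · exact hRn

end MeasureTheory.IsSetSemiring

theorem semiring_selfDissecting_of_countable_separating {S : Type*}
    (H : Set (Set S)) (hH : MeasureTheory.IsSetSemiring H)
    (E : Set (Set S)) (hEH : E ⊆ H) (hEc : E.Countable)
    (hsep : ∀ x y : S, x ≠ y → ∃ A ∈ E, Xor' (x ∈ A) (y ∈ A)) :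
    SelfDissecting H := by
  obtain ⟨e, he⟩ := (hEc.insert ∅).exists_eq_range (insert_nonempty ∅ E)
  have heH : ∀ m, e m ∈ H := fun m =>
    insert_subset hH.empty_mem hEH (he ▸ mem_range_self m)
  refine ⟨⟨∅, hH.empty_mem⟩, fun A hA => ?_⟩
  choose P hP hPe using hH.exists_isFinitePartitionIn_forall_lt_subset_or_disjoint heH hA
  choose I B hB using fun n => (hP n).finite.countable.exists_bijOn_nat
  refine ⟨I, B, isDissectingSystem_of_bijOn hB (fun n => (hP n).pairwiseDisjoint)
    (fun n => (hP n).sUnion_eq) fun x _ y _ hxy => ?_,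
    fun n k hk => (hP n).subset ((hB n).mapsTo hk)⟩
  obtain ⟨C, hC, hxy⟩ := hsep x y hxy
  obtain ⟨m, rfl⟩ : C ∈ range e := he ▸ mem_insert_of_mem ∅ hC
  exact ⟨m + 1, fun n hn R hR hxR hyR =>
    not_xor_mem_of_subset_or_disjoint hxR hyR (hPe n R hR m hn) hxy⟩
end

section
/- If ℰ is a self-dissecting collection of subsets of S, then the hit-or-miss σ-field 𝔥(ℰ) = σ({M ∈ C(S) : M ∩ A ≠ ∅} : A ∈ ℰ) on the space C(S) of countable subsets of S equals the counting σ-field 𝒞(ℰ) = σ(N_A : A ∈ ℰ), where N_A(M) = |M ∩ A|. -/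
open MeasureTheory Filter

/-!
Every hitting event `{N_A ≠ 0}` is an `N_A`-event, so `𝔥(ℰ) ≤ 𝒞(ℰ)`. Conversely, for a dissecting
system of `A` drawn from `ℰ`, finitely many points of `A` eventually lie in pairwise distinct cells,
so `N_A(M) ≥ m` holds exactly when at some level `M` hits `m` distinct cells: a countable union of
finite intersections of hitting events. Hence every `N_A` is `𝔥(ℰ)`-measurable.
-/

namespace IsDissectingSystem

variable {S : Type*} {A : Set S} {I : ℕ → Set ℕ} {B : ℕ → ℕ → Set S}

theorem eventually_exists_mem_cell (hD : IsDissectingSystem A I B) {x : S} (hx : x ∈ A) :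
    ∀ᶠ n in atTop, ∃ k ∈ I n, x ∈ B n k := by
  have hmono : Monotone fun n => ⋃ k ∈ I n, B n k := monotone_nat_of_le_succ hD.2.2.1
  rw [← hD.2.2.2.1, Set.mem_iUnion] at hx
  obtain ⟨n₀, hn₀⟩ := hx
  filter_upwards [eventually_ge_atTop n₀] with n hn
  simpa only [Set.mem_iUnion, exists_prop] using hmono hn hn₀

theorem mem_cell_iff_of_mem_cell (hD : IsDissectingSystem A I B) {n k k' : ℕ}
    (hk : k ∈ I n) (hk' : k' ∈ I n) {x y : S} (hx : x ∈ B n k) (hy : y ∈ B n k) :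
    x ∈ B n k' ↔ y ∈ B n k' := by
  rcases eq_or_ne k k' with rfl | hne
  · exact iff_of_true hx hy
  · have hdisj := hD.2.1 n hk hk' hne
    exact iff_of_false (fun hx' => hdisj.le_bot ⟨hx, hx'⟩) fun hy' => hdisj.le_bot ⟨hy, hy'⟩

theorem eventually_cells_ne (hD : IsDissectingSystem A I B) {x y : S} (hx : x ∈ A) (hy : y ∈ A)
    (hxy : x ≠ y) :
    ∀ᶠ n in atTop, ∀ kx ∈ I n, ∀ ky ∈ I n, x ∈ B n kx → y ∈ B n ky → kx ≠ ky := by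
  obtain ⟨N, hN⟩ := hD.2.2.2.2 x hx y hy hxy
  filter_upwards [eventually_ge_atTop N] with n hn
  intro kx hkx ky _ hxk hyk hkxy
  subst hkxy
  obtain ⟨k, hk, hsep⟩ := hN n hn
  exact xor_iff_not_iff _ _ |>.1 hsep (hD.mem_cell_iff_of_mem_cell hkx hk hxk hyk)

theorem exists_injOn_cells (hD : IsDissectingSystem A I B) {t : Set S} (ht : t.Finite)
    (htA : t ⊆ A) :
    ∃ n, ∃ c : S → ℕ, Set.MapsTo c t (I n) ∧ (∀ x ∈ t, x ∈ B n (c x)) ∧ Set.InjOn c t := by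
  have hcover : ∀ᶠ n in atTop, ∀ x ∈ t, ∃ k ∈ I n, x ∈ B n k :=
    (eventually_all_finite ht).2 fun x hx => hD.eventually_exists_mem_cell (htA hx)
  have hsep : ∀ᶠ n in atTop, ∀ x ∈ t, ∀ y ∈ t, x ≠ y →
      ∀ kx ∈ I n, ∀ ky ∈ I n, x ∈ B n kx → y ∈ B n ky → kx ≠ ky :=
    (eventually_all_finite ht).2 fun x hx => (eventually_all_finite ht).2 fun y hy =>
      eventually_imp_distrib_left.2 (hD.eventually_cells_ne (htA hx) (htA hy))
  obtain ⟨n, hcover_n, hsep_n⟩ := (hcover.and hsep).exists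
  choose! c hcI hcB using hcover_n
  refine ⟨n, c, hcI, hcB, fun x hx y hy hc => ?_⟩
  by_contra hxy
  exact hsep_n x hx y hy hxy _ (hcI x hx) _ (hcI y hy) (hcB x hx) (hcB y hy) hc

theorem le_encard_inter_iff (hD : IsDissectingSystem A I B) (M : Set S) (m : ℕ) :
    (m : ℕ∞) ≤ (M ∩ A).encard ↔
      ∃ n, ∃ s : Finset ℕ, s.card = m ∧ ↑s ⊆ I n ∧ ∀ k ∈ s, (M ∩ B n k).Nonempty := by
  constructor
  · intro hm
    obtain ⟨t, htMA, htm⟩ := Set.exists_subset_encard_eq hm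
    have ht : t.Finite := Set.finite_of_encard_eq_coe htm
    obtain ⟨n, c, hcI, hcB, hinj⟩ := hD.exists_injOn_cells ht fun x hx => (htMA hx).2
    refine ⟨n, (ht.image c).toFinset, ?_, ?_, ?_⟩
    · rw [← ENat.natCast_inj, ← (ht.image c).encard_eq_coe_toFinset_card, hinj.encard_image, htm]
    · simpa only [Set.Finite.coe_toFinset] using hcI.image_subset
    · simp only [Set.Finite.mem_toFinset, Set.forall_mem_image]
      exact fun x hx => ⟨x, (htMA hx).1, hcB x hx⟩
  · rintro ⟨n, s, rfl, hsI, hhit⟩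
    obtain rfl | ⟨k₀, hk₀⟩ := s.eq_empty_or_nonempty
    · simp
    have : Nonempty S := ⟨(hhit k₀ hk₀).some⟩
    choose! x hxM hxB using hhit
    have hinj : Set.InjOn x s := fun k hk k' hk' hxk =>
      (hD.2.1 n).elim (hsI hk) (hsI hk') (Set.not_disjoint_iff.2 ⟨x k, hxB k hk, hxk ▸ hxB k' hk'⟩)
    calc (s.card : ℕ∞) = (x '' s).encard := by
          rw [hinj.encard_image, Set.encard_coe_eq_coe_finsetCard]
      _ ≤ (M ∩ A).encard := Set.encard_le_encard <| Set.image_subset_iff.2 fun k hk =>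
          ⟨hxM k hk, hD.1 n k (hsI hk) (hxB k hk)⟩

end IsDissectingSystem

section SigmaFields

variable {S : Type*}

theorem measurable_NA_countingSigma {T : Set (Set S)} {A : Set S} (hA : A ∈ T) :
    Measurable[countingSigma T] (NA A) :=
  Measurable.of_comap_le <| le_iSup₂ (f := fun A (_ : A ∈ T) => MeasurableSpace.comap (NA A) ⊤) A hA

theorem countingSigma_le_iff {T : Set (Set S)} {m : MeasurableSpace (CS S)} :
    countingSigma T ≤ m ↔ ∀ A ∈ T, Measurable[m] (NA A) :=
  ⟨fun h _ hA => (measurable_NA_countingSigma hA).mono h le_rfl,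
    fun h => iSup₂_le fun A hA => (h A hA).comap_le⟩

theorem setOf_inter_nonempty_eq_preimage_NA (A : Set S) :
    {M : CS S | (M.1 ∩ A).Nonempty} = NA A ⁻¹' {0}ᶜ := by
  ext M
  simp [NA, Set.nonempty_iff_ne_empty]

theorem hitOrMiss_le_countingSigma (E : Set (Set S)) : hitOrMiss E ≤ countingSigma E := by
  refine MeasurableSpace.generateFrom_le ?_
  rintro - ⟨A, hA, rfl⟩
  dsimp only
  rw [setOf_inter_nonempty_eq_preimage_NA]
  exact measurable_NA_countingSigma hA (measurableSet_singleton 0).compl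

theorem measurableSet_hitOrMiss_setOf_inter_nonempty {E : Set (Set S)} {A : Set S} (hA : A ∈ E) :
    MeasurableSet[hitOrMiss E] {M : CS S | (M.1 ∩ A).Nonempty} :=
  MeasurableSpace.measurableSet_generateFrom ⟨A, hA, rfl⟩

variable {E : Set (Set S)} {A : Set S} {I : ℕ → Set ℕ} {B : ℕ → ℕ → Set S}

theorem IsDissectingSystem.measurableSet_hitOrMiss_setOf_le_NA (hD : IsDissectingSystem A I B)
    (hBE : ∀ n, ∀ k ∈ I n, B n k ∈ E) (m : ℕ) :
    MeasurableSet[hitOrMiss E] {M : CS S | (m : ℕ∞) ≤ NA A M} := by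
  have hset : {M : CS S | (m : ℕ∞) ≤ NA A M} = ⋃ (n : ℕ) (s : Finset ℕ)
      (_ : s.card = m ∧ ↑s ⊆ I n), ⋂ k ∈ s, {M : CS S | (M.1 ∩ B n k).Nonempty} := by
    ext M
    simp only [NA, Set.mem_ofPred_eq, hD.le_encard_inter_iff, Set.mem_iUnion, Set.mem_iInter,
      exists_prop, and_assoc]
  rw [hset]
  exact .iUnion fun n => .iUnion fun s => .iUnion fun hs =>
    s.measurableSet_biInter fun k hk =>
      measurableSet_hitOrMiss_setOf_inter_nonempty (hBE n k (hs.2 hk))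

theorem IsDissectingSystem.measurable_NA_hitOrMiss (hD : IsDissectingSystem A I B)
    (hBE : ∀ n, ∀ k ∈ I n, B n k ∈ E) : Measurable[hitOrMiss E] (NA A) := by
  refine @ENat.measurable_iff _ (hitOrMiss E) _ |>.2 fun m => ?_
  have hfiber : NA A ⁻¹' {(m : ℕ∞)} =
      {M : CS S | (m : ℕ∞) ≤ NA A M} \ {M : CS S | ((m + 1 : ℕ) : ℕ∞) ≤ NA A M} := by
    ext M
    simp only [Set.mem_preimage, Set.mem_singleton_iff, Set.mem_sdiff, Set.mem_ofPred_eq, not_le,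
      Nat.cast_add, Nat.cast_one, ENat.lt_add_one_iff (ENat.natCast_ne_top m), le_antisymm_iff,
      and_comm]
  rw [hfiber]
  exact (hD.measurableSet_hitOrMiss_setOf_le_NA hBE m).diff
    (hD.measurableSet_hitOrMiss_setOf_le_NA hBE (m + 1))

end SigmaFields

theorem hitOrMiss_eq_countingSigma_of_selfDissecting {S : Type*}
    (E : Set (Set S)) (hE : SelfDissecting E) :
    hitOrMiss E = countingSigma E := by
  refine le_antisymm (hitOrMiss_le_countingSigma E) (countingSigma_le_iff.2 fun A hA => ?_)
  obtain ⟨I, B, hD, hBE⟩ := hE.2 A hA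
  exact hD.measurable_NA_hitOrMiss hBE
end

section
/- Let ℰ be a nonempty collection of subsets of S and A ⊆ S. Then the event {M ∈ C(S) : M ∩ A ≠ ∅} belongs to the hit-or-miss σ-field 𝔥(ℰ) if and only if A is a countable union of sets in ℰ. -/
/-!
If `A` is a countable union of members of `ℰ`, the hitting event of `A` is the countable union
of their hitting events. Conversely, a set in a generated σ-field already lies in the σ-field
generated by countably many of the generators, the hitting events of some countable `ℰ₀ ⊆ ℰ`;
we show that `A` is the union of the members of `ℰ₀` contained in `A`. Otherwise some `x ∈ A`
is such that every `C ∈ ℰ₀` containing `x` has a point `y_C ∉ A`. The countable sets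
`M = {y_C}` and `insert x M` hit exactly the same members of `ℰ₀`, so no set of the σ-field
separates them, yet only the second one hits `A`.
-/

open MeasureTheory Filter

open MeasurableSpace Set

namespace MeasurableSpace

variable {α ι : Type*}

theorem exists_countable_of_measurableSet_generateFrom_image {f : ι → Set α} {E : Set ι}
    {t : Set α} (ht : MeasurableSet[generateFrom (f '' E)] t) :
    ∃ E₀ ⊆ E, E₀.Countable ∧ MeasurableSet[generateFrom (f '' E₀)] t := by
  induction ht with
  | basic u hu =>
    obtain ⟨i, hi, rfl⟩ := hu
    exact ⟨{i}, singleton_subset_iff.2 hi, countable_singleton i,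
      measurableSet_generateFrom (mem_image_of_mem f rfl)⟩
  | empty => exact ⟨∅, empty_subset _, countable_empty,
    @MeasurableSet.empty _ (generateFrom _)⟩
  | compl u _ ih =>
    obtain ⟨E₀, hE₀E, hE₀, hu⟩ := ih
    exact ⟨E₀, hE₀E, hE₀, hu.compl⟩
  | iUnion u _ ih =>
    choose E₀ hE₀E hE₀ hu using ih
    exact ⟨⋃ n, E₀ n, iUnion_subset hE₀E, countable_iUnion hE₀, .iUnion fun n =>
      generateFrom_mono (image_mono (subset_iUnion E₀ n)) _ (hu n)⟩

theorem mem_iff_mem_of_measurableSet_generateFrom {G : Set (Set α)} {x y : α}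
    (h : ∀ g ∈ G, x ∈ g ↔ y ∈ g) {t : Set α} (ht : MeasurableSet[generateFrom G] t) :
    x ∈ t ↔ y ∈ t := by
  induction ht with
  | basic u hu => exact h u hu
  | empty => rfl
  | compl u _ ih => exact not_congr ih
  | iUnion u _ ih => simpa only [mem_iUnion] using exists_congr ih

end MeasurableSpace

theorem Set.insert_inter_nonempty_iff {α : Type*} {x : α} {M C : Set α}
    (h : x ∈ C → (M ∩ C).Nonempty) : (insert x M ∩ C).Nonempty ↔ (M ∩ C).Nonempty := by
  by_cases hxC : x ∈ C
  · simp [insert_inter_of_mem hxC, h hxC]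
  · rw [insert_inter_of_notMem hxC]

section Hitting

variable {S : Type*}

def hittingEvent (A : Set S) : Set (CS S) := {M | (M.1 ∩ A).Nonempty}

theorem hittingEvent_sUnion (U : Set (Set S)) :
    hittingEvent (⋃₀ U) = ⋃ C ∈ U, hittingEvent C := by
  ext M
  simp only [hittingEvent, mem_iUnion, mem_ofPred_eq]
  exact ⟨fun ⟨z, hzM, C, hC, hzC⟩ => ⟨C, hC, z, hzM, hzC⟩,
    fun ⟨C, hC, z, hzM, hzC⟩ => ⟨z, hzM, C, hC, hzC⟩⟩

theorem subset_sUnion_of_measurableSet_hittingEvent {E₀ : Set (Set S)} (hE₀ : E₀.Countable)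
    {A : Set S} (hA : MeasurableSet[generateFrom (hittingEvent '' E₀)] (hittingEvent A)) :
    A ⊆ ⋃₀ {C ∈ E₀ | C ⊆ A} := by
  intro x hxA
  by_contra hx
  have hy : ∀ C : {C ∈ E₀ | x ∈ C}, ∃ y ∈ C.1, y ∉ A := fun C =>
    not_subset.1 fun hCA => hx ⟨C, ⟨C.2.1, hCA⟩, C.2.2⟩
  choose y hyC hyA using hy
  have : Countable {C ∈ E₀ | x ∈ C} := (hE₀.mono (sep_subset _ _)).to_subtype
  let M : CS S := ⟨range y, countable_range y⟩
  let M' : CS S := ⟨insert x (range y), (countable_range y).insert x⟩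
  have hMM' : ∀ g ∈ hittingEvent '' E₀, M' ∈ g ↔ M ∈ g := by
    rintro _ ⟨C, hC, rfl⟩
    exact insert_inter_nonempty_iff fun hxC =>
      ⟨y ⟨C, hC, hxC⟩, mem_range_self _, hyC ⟨C, hC, hxC⟩⟩
  have hM' : M' ∈ hittingEvent A := ⟨x, mem_insert x _, hxA⟩
  obtain ⟨_, ⟨C, rfl⟩, hyCA⟩ := (mem_iff_mem_of_measurableSet_generateFrom hMM' hA).1 hM'
  exact hyA C hyCA

end Hitting

theorem hitting_event_mem_hitOrMiss_iff_general {S : Type*}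
    (E : Set (Set S)) (A : Set S) :
    @MeasurableSet (CS S) (hitOrMiss E) {M : CS S | (M.1 ∩ A).Nonempty} ↔
      ∃ U ⊆ E, U.Countable ∧ A = ⋃₀ U := by
  change MeasurableSet[generateFrom (hittingEvent '' E)] (hittingEvent A) ↔ _
  constructor
  · intro hA
    obtain ⟨E₀, hE₀E, hE₀, hA₀⟩ := exists_countable_of_measurableSet_generateFrom_image hA
    exact ⟨{C ∈ E₀ | C ⊆ A}, fun C hC => hE₀E hC.1, hE₀.mono (sep_subset _ _),
      (subset_sUnion_of_measurableSet_hittingEvent hE₀ hA₀).antisymm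
        (sUnion_subset fun C hC => hC.2)⟩
  · rintro ⟨U, hUE, hU, rfl⟩
    rw [hittingEvent_sUnion]
    exact .biUnion hU fun C hC => measurableSet_generateFrom (mem_image_of_mem _ (hUE hC))

theorem hitting_event_mem_hitOrMiss_iff {S : Type*}
    (E : Set (Set S)) (hE : E.Nonempty) (A : Set S) :
    @MeasurableSet (CS S) (hitOrMiss E) {M : CS S | (M.1 ∩ A).Nonempty} ↔
      ∃ U ⊆ E, U.Countable ∧ A = ⋃₀ U :=
  hitting_event_mem_hitOrMiss_iff_general E A
end

section
/- Let ℰ and 𝒯 be nonempty collections of subsets of S with 𝒞(𝒯) ⊆ 𝒞(ℰ) (counting σ-fields on C(S)). If 𝒯 contains a countable subset separating points of S, then so does ℰ. -/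
open MeasureTheory Filter

/-!
A set measurable for `𝒞(ℰ)` is already measurable for `𝒞(ℱ)` with `ℱ ⊆ ℰ` countable. Take a
countable separating `𝒟 ⊆ 𝒯`; each event `{N_A ≠ 0}`, `A ∈ 𝒟`, lies in `𝒞(𝒯) ⊆ 𝒞(ℰ)`, hence in
some `𝒞(ℱ_A)`, and `⋃ ℱ_A` is the required family. Indeed, if it failed to separate `x ≠ y`,
the configurations `{x}` and `{y}` would have the same counts on every member, so no set of
`𝒞(⋃ ℱ_A)` could tell them apart; yet `{N_A ≠ 0}` does for an `A ∈ 𝒟` separating `x` and `y`.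
-/

namespace MeasurableSpace

theorem exists_countable_measurableSet_biSup_of_measurableSet_iSup {α ι : Type*}
    {m : ι → MeasurableSpace α} {s : Set α} (hs : MeasurableSet[⨆ i, m i] s) :
    ∃ J : Set ι, J.Countable ∧ MeasurableSet[⨆ i ∈ J, m i] s := by
  rw [measurableSet_iSup] at hs
  induction hs with
  | basic u hu =>
    obtain ⟨i, hi⟩ := hu
    exact ⟨{i}, Set.countable_singleton i, le_biSup m (Set.mem_singleton i) _ hi⟩
  | empty => exact ⟨∅, Set.countable_empty, @MeasurableSet.empty _ (_)⟩
  | compl u _ ih =>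
    obtain ⟨J, hJ, hu⟩ := ih
    exact ⟨J, hJ, hu.compl⟩
  | iUnion f _ ih =>
    choose J hJ hf using ih
    refine ⟨⋃ n, J n, Set.countable_iUnion hJ, MeasurableSet.iUnion fun n => ?_⟩
    have hle : ⨆ i ∈ J n, m i ≤ ⨆ i ∈ ⋃ n, J n, m i :=
      biSup_mono fun i hi => Set.mem_iUnion.mpr ⟨n, hi⟩
    exact hle _ (hf n)

def ofInseparable {α : Type*} (a b : α) : MeasurableSpace α where
  MeasurableSet' s := a ∈ s ↔ b ∈ s
  measurableSet_empty := Iff.rfl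
  measurableSet_compl _ hs := not_congr hs
  measurableSet_iUnion _ hf := by simp only [Set.mem_iUnion]; exact exists_congr hf

end MeasurableSpace

namespace CS

variable {S : Type*}

def singleton (x : S) : CS S := ⟨{x}, Set.countable_singleton x⟩

theorem NA_singleton (A : Set S) (x : S) : NA A (singleton x) = A.indicator 1 x := by
  by_cases hx : x ∈ A
  · simp [NA, singleton, Set.singleton_inter_of_mem hx, hx]
  · simp [NA, singleton, Set.singleton_inter_eq_empty.mpr hx, hx]

theorem NA_singleton_ne_zero_iff {A : Set S} {x : S} : NA A (singleton x) ≠ 0 ↔ x ∈ A := by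
  simp [NA_singleton]

theorem NA_singleton_congr {A : Set S} {x y : S} (h : x ∈ A ↔ y ∈ A) :
    NA A (singleton x) = NA A (singleton y) := by
  by_cases hx : x ∈ A
  · simp [NA_singleton, hx, h.mp hx]
  · simp [NA_singleton, hx, mt h.mpr hx]

end CS

section countingSigma

variable {S : Type*}

theorem countingSigma_mono {F G : Set (Set S)} (h : F ⊆ G) : countingSigma F ≤ countingSigma G :=
  biSup_mono fun _ hA => h hA

theorem measurableSet_countingSigma_NA_ne_zero {T : Set (Set S)} {A : Set S} (hA : A ∈ T) :
    MeasurableSet[countingSigma T] {M | NA A M ≠ 0} :=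
  le_biSup (fun B => MeasurableSpace.comap (NA B) ⊤) hA _ ⟨{0}ᶜ, trivial, rfl⟩

theorem exists_countable_subset_measurableSet_countingSigma {E : Set (Set S)} {s : Set (CS S)}
    (hs : MeasurableSet[countingSigma E] s) :
    ∃ F ⊆ E, F.Countable ∧ MeasurableSet[countingSigma F] s := by
  rw [countingSigma, ← iSup_subtype''] at hs
  obtain ⟨J, hJ, hs⟩ :=
    MeasurableSpace.exists_countable_measurableSet_biSup_of_measurableSet_iSup hs
  refine ⟨Subtype.val '' J, Subtype.coe_image_subset E J, hJ.image _, ?_⟩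
  have hle : ⨆ B ∈ J, MeasurableSpace.comap (NA (B : Set S)) ⊤ ≤ countingSigma (Subtype.val '' J) :=
    iSup₂_le fun B hB =>
      le_biSup (fun B => MeasurableSpace.comap (NA B) ⊤) (Set.mem_image_of_mem _ hB)
  exact hle _ hs

theorem countingSigma_le_ofInseparable_singleton {F : Set (Set S)} {x y : S}
    (h : ∀ B ∈ F, x ∈ B ↔ y ∈ B) :
    countingSigma F ≤ MeasurableSpace.ofInseparable (CS.singleton x) (CS.singleton y) := by
  refine iSup₂_le fun B hB => ?_
  rintro _ ⟨t, -, rfl⟩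
  show NA B (CS.singleton x) ∈ t ↔ NA B (CS.singleton y) ∈ t
  rw [CS.NA_singleton_congr (h B hB)]

end countingSigma

theorem separating_transfers_along_countingSigma_le_general {S : Type*}
    (E T : Set (Set S))
    (hle : countingSigma T ≤ countingSigma E)
    (hsep : ∃ D ⊆ T, D.Countable ∧ ∀ x y : S, x ≠ y → ∃ A ∈ D, Xor' (x ∈ A) (y ∈ A)) :
    ∃ D ⊆ E, D.Countable ∧ ∀ x y : S, x ≠ y → ∃ A ∈ D, Xor' (x ∈ A) (y ∈ A) := by
  obtain ⟨D, hDT, hD, hDsep⟩ := hsep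
  have hF : ∀ A ∈ D, ∃ F ⊆ E, F.Countable ∧ MeasurableSet[countingSigma F] {M | NA A M ≠ 0} :=
    fun A hA => exists_countable_subset_measurableSet_countingSigma
      (hle _ (measurableSet_countingSigma_NA_ne_zero (hDT hA)))
  choose F hFE hF hFA using hF
  have : Countable D := hD.to_subtype
  refine ⟨⋃ A : D, F A A.2, Set.iUnion_subset fun A => hFE _ _,
    Set.countable_iUnion fun A => hF _ _, fun x y hxy => ?_⟩
  by_contra! hxy'
  have hnsep : ∀ B ∈ ⋃ A : D, F A A.2, x ∈ B ↔ y ∈ B := fun B hB =>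
    (not_xor _ _).mp (hxy' B hB)
  obtain ⟨A, hA, hAxy⟩ := hDsep x y hxy
  have hsub : F A hA ⊆ ⋃ A : D, F A A.2 := Set.subset_iUnion_of_subset ⟨A, hA⟩ le_rfl
  have hiff : NA A (CS.singleton x) ≠ 0 ↔ NA A (CS.singleton y) ≠ 0 :=
    countingSigma_le_ofInseparable_singleton hnsep _ (countingSigma_mono hsub _ (hFA A hA))
  simp only [CS.NA_singleton_ne_zero_iff] at hiff
  exact (xor_iff_not_iff _ _).mp hAxy hiff

theorem separating_transfers_along_countingSigma_le {S : Type*}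
    (E T : Set (Set S)) (hE : E.Nonempty) (hT : T.Nonempty)
    (hle : countingSigma T ≤ countingSigma E)
    (hsep : ∃ D ⊆ T, D.Countable ∧ ∀ x y : S, x ≠ y → ∃ A ∈ D, Xor' (x ∈ A) (y ∈ A)) :
    ∃ D ⊆ E, D.Countable ∧ ∀ x y : S, x ≠ y → ∃ A ∈ D, Xor' (x ∈ A) (y ∈ A) :=
  separating_transfers_along_countingSigma_le_general E T hle hsep
end

section
/- Let ℰ be an ∩-stable collection generating 𝒮 and let 𝖥 be a collection of subsets of S. Suppose there exist E₁, E₂, … ∈ ℰ ∩ 𝖥 with S = ∪ₙ Eₙ. Then on the space C^𝖥(S) = {M ∈ C(S) : |M ∩ A| < ∞ for all A ∈ 𝖥}, the σ-field generated by the restricted counting maps {N_E^𝖥 : E ∈ ℰ} equals the σ-field generated by {N_A^𝖥 : A ∈ 𝒮}. -/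
open MeasureTheory

/-- The subspace `C^𝖥(S)` of countable subsets of `S` that are finite on `𝖥`. -/
def CF {S : Type*} (F : Set (Set S)) : Type _ :=
  {M : Set S // M.Countable ∧ ∀ A ∈ F, (M ∩ A).Finite}

/-- The restricted counting map `N_A^𝖥`. -/
noncomputable def NAF {S : Type*} (F : Set (Set S)) (A : Set S) (M : CF F) : ℕ∞ :=
  (M.1 ∩ A).encard

/-- The counting σ-field `𝒞^𝖥(𝒯)` on `C^𝖥(S)`. -/
noncomputable def countingSigmaF {S : Type*} (F : Set (Set S)) (T : Set (Set S)) :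
    MeasurableSpace (CF F) :=
  ⨆ A ∈ T, MeasurableSpace.comap (NAF F A) ⊤

/-!
The counting maps `N_A` are additive in `A`, subtractive on sets of `𝖥`, and continuous along
increasing unions, so for a fixed `B ∈ E ∩ 𝖥` the sets `t` with `N_{B ∩ t}` measurable for
`𝒞^𝖥(E)` form a Dynkin system; it contains the π-system `E`, hence all of `𝒮`. A measurable `A`
is the disjoint union of the pieces `A ∩ (Eₙ \ ⋃_{k<n} E_k)`, each lying in some `Eₙ`.
-/

instance ENat.borelSpace : BorelSpace ℕ∞ :=
  ⟨borel_eq_top_of_countable.symm⟩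

theorem Set.encard_iUnion_of_directed {α ι : Type*} [Nonempty ι] {s : ι → Set α}
    (hs : Directed (· ⊆ ·) s) : (⋃ i, s i).encard = ⨆ i, (s i).encard := by
  refine le_antisymm (ENat.forall_natCast_le_iff_le.mp fun m hm => ?_)
    (iSup_le fun i => encard_mono (subset_iUnion s i))
  obtain ⟨t, hts, htm⟩ := exists_subset_encard_eq hm
  have ht : t.Finite := finite_of_encard_eq_coe htm
  obtain ⟨i, hi⟩ := hs.exists_mem_subset_of_finset_subset_biUnion (s := ht.toFinset) (by simpa)
  exact htm ▸ (encard_mono (by simpa using hi)).trans (le_iSup (fun i => (s i).encard) i)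

section NAF

variable {S : Type*} {F : Set (Set S)}

theorem NAF_empty : NAF F ∅ = 0 := by
  funext M
  simp [NAF]

theorem NAF_union {A B : Set S} (h : Disjoint A B) : NAF F (A ∪ B) = NAF F A + NAF F B := by
  funext M
  simp only [NAF, Set.inter_union_distrib_left, Pi.add_apply]
  exact Set.encard_union_eq (h.mono Set.inter_subset_right Set.inter_subset_right)

theorem NAF_diff {B : Set S} (hB : B ∈ F) (t : Set S) :
    NAF F (B \ t) = NAF F B - NAF F (B ∩ t) := by
  funext M
  have hfin : (M.1 ∩ B ∩ t).encard ≠ ⊤ :=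
    Set.encard_ne_top_iff.2 ((M.2.2 B hB).subset Set.inter_subset_left)
  have hsplit := Set.encard_sdiff_add_encard_inter (M.1 ∩ B) t
  simp only [NAF, Pi.sub_apply, ← Set.inter_assoc, Set.inter_sdiff_assoc] at hsplit ⊢
  exact (ENat.addLECancellable_of_ne_top hfin).eq_tsub_of_add_eq hsplit

theorem NAF_iUnion_of_directed {ι : Type*} [Nonempty ι] {s : ι → Set S}
    (hs : Directed (· ⊆ ·) s) (M : CF F) : NAF F (⋃ i, s i) M = ⨆ i, NAF F (s i) M := by
  simp only [NAF, Set.inter_iUnion]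
  exact Set.encard_iUnion_of_directed (hs.mono_comp _ fun _ _ h => Set.inter_subset_inter_right _ h)

variable {m : MeasurableSpace (CF F)}

theorem measurable_NAF_iUnion_of_monotone {s : ℕ → Set S} (hs : Monotone s)
    (h : ∀ n, Measurable[m] (NAF F (s n))) : Measurable[m] (NAF F (⋃ n, s n)) := by
  simp_rw [funext (NAF_iUnion_of_directed hs.directed_le)]
  exact Measurable.iSup h

theorem measurable_NAF_iUnion {s : ℕ → Set S} (hs : Pairwise (Function.onFun Disjoint s))
    (h : ∀ n, Measurable[m] (NAF F (s n))) : Measurable[m] (NAF F (⋃ n, s n)) := by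
  have hpartial : ∀ n, Measurable[m] (NAF F (partialSups s n)) := by
    intro n
    induction n with
    | zero => simpa using h 0
    | succ n ih =>
      rw [← Order.succ_eq_add_one, partialSups_succ]
      change Measurable (NAF F (_ ∪ _))
      rw [NAF_union (partialSups_disjoint_of_disjoint s hs (Order.lt_succ n))]
      exact ih.add (h _)
  rw [← Set.iSup_eq_iUnion, ← iSup_partialSups_eq]
  exact measurable_NAF_iUnion_of_monotone (partialSups s).monotone hpartial

end NAF

theorem countingSigmaF_le_iff {S : Type*} {F T : Set (Set S)} {m : MeasurableSpace (CF F)} :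
    countingSigmaF F T ≤ m ↔ ∀ A ∈ T, Measurable[m] (NAF F A) := by
  simp only [countingSigmaF, iSup₂_le_iff, measurable_iff_comap_le]
  rfl

theorem measurable_NAF_of_mem {S : Type*} {F T : Set (Set S)} {A : Set S} (hA : A ∈ T) :
    Measurable[countingSigmaF F T] (NAF F A) :=
  countingSigmaF_le_iff.1 le_rfl A hA

theorem countingSigmaF_mono {S : Type*} {F T T' : Set (Set S)} (h : T ⊆ T') :
    countingSigmaF F T ≤ countingSigmaF F T' :=
  countingSigmaF_le_iff.2 fun _ hA => measurable_NAF_of_mem (h hA)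

/-- Dynkin's π-λ argument inside `B`: since `B ∈ 𝖥`, counts inside `B` are finite, so the count
of a complement is obtained by subtraction. -/
theorem measurable_NAF_inter_of_measurableSet {S : Type*} [MeasurableSpace S]
    {E F : Set (Set S)} (hstable : ∀ A ∈ E, ∀ B ∈ E, A ∩ B ∈ E)
    (hgen : MeasurableSpace.generateFrom E = ‹MeasurableSpace S›)
    {B : Set S} (hBE : B ∈ E) (hBF : B ∈ F) {t : Set S} (ht : MeasurableSet t) :
    Measurable[countingSigmaF F E] (NAF F (B ∩ t)) := by
  induction t, ht using MeasurableSpace.induction_on_inter hgen.symm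
    (fun A hA C hC _ => hstable A hA C hC) with
  | empty =>
    rw [Set.inter_empty, NAF_empty]
    exact measurable_const
  | basic t ht => exact measurable_NAF_of_mem (hstable B hBE t ht)
  | compl t _ ih =>
    rw [← Set.sdiff_eq, NAF_diff hBF]
    exact (measurable_NAF_of_mem hBE).sub ih
  | iUnion s hs _ ih =>
    rw [Set.inter_iUnion]
    exact measurable_NAF_iUnion (fun i j hij => (hs hij).mono Set.inter_subset_right
      Set.inter_subset_right) ih

theorem countingSigmaF_generated_by_interStable {S : Type*} [MeasurableSpace S]
    (E F : Set (Set S))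
    (hstable : ∀ A ∈ E, ∀ B ∈ E, A ∩ B ∈ E)
    (hgen : MeasurableSpace.generateFrom E = ‹MeasurableSpace S›)
    (hcov : ∃ f : ℕ → Set S, (∀ n, f n ∈ E ∧ f n ∈ F) ∧ (⋃ n, f n) = Set.univ) :
    countingSigmaF F E = countingSigmaF F {A : Set S | MeasurableSet A} := by
  obtain ⟨f, hf, hcov⟩ := hcov
  have hE : E ⊆ {A | MeasurableSet A} := fun A hA => hgen ▸ .basic A hA
  refine le_antisymm (countingSigmaF_mono hE) (countingSigmaF_le_iff.2 fun A hA => ?_)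
  have hpieces : ⋃ n, f n ∩ (disjointed f n ∩ A) = A := by
    simp_rw [Set.inter_eq_right.2 (Set.inter_subset_left.trans (disjointed_subset f _))]
    rw [← Set.iUnion_inter, iUnion_disjointed, hcov, Set.univ_inter]
  rw [← hpieces]
  refine measurable_NAF_iUnion (fun i j hij => ?_) fun n =>
    measurable_NAF_inter_of_measurableSet hstable hgen (hf n).1 (hf n).2
      ((MeasurableSet.disjointed (fun k => hE (hf k).1) n).inter hA)
  exact (disjoint_disjointed f hij).mono (Set.inter_subset_right.trans Set.inter_subset_left)
    (Set.inter_subset_right.trans Set.inter_subset_left)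
end

section
/- Let ℰ be a ∩-stable collection of subsets of S generating 𝒮 with ∅ ∈ ℰ and ℰ ⊆ (ℰ_int)_σ. If π : Ω → C(S) is a constructive countable random set, then its hitting function satisfies T_π(A) = sup{ T_π(F) : F ∈ ℰ_int, F ⊆ A } for all A ∈ 𝒮. -/
open MeasureTheory Filter

/-- A finite countable random set: a measurable map into `(C(S), 𝒞(𝒮))` taking
finite values. -/
def FiniteCr {Ω S : Type*} [MeasurableSpace Ω] [MeasurableSpace S] (π : Ω → CS S) : Prop :=
  @Measurable Ω (CS S) _ (countingSigmaField S) π ∧ ∀ ω, (π ω).1.Finite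

/-- A map into `C(S)` is constructive if it is a countable union of finite
countable random sets. -/
def Constructive {Ω S : Type*} [MeasurableSpace Ω] [MeasurableSpace S] (π : Ω → CS S) : Prop :=
  ∃ πk : ℕ → Ω → CS S, (∀ k, FiniteCr (πk k)) ∧ ∀ ω, (π ω).1 = ⋃ k, (πk k ω).1

/-- `ℰ_int = (ℰᶜ)_δ`: countable intersections of complements of `ℰ`-sets. -/
def Eint {S : Type*} (E : Set (Set S)) : Set (Set S) :=
  {B | ∃ f : ℕ → Set S, (∀ n, f n ∈ E) ∧ B = ⋂ n, (f n)ᶜ}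

/-- `ℰ_σ`: countable unions of `ℰ`-sets. -/
def Esigma {S : Type*} (E : Set (Set S)) : Set (Set S) :=
  {B | ∃ f : ℕ → Set S, (∀ n, f n ∈ E) ∧ B = ⋃ n, f n}


/-!
For a pointwise finite random set `ρ`, the hitting probability `D ↦ P(ρ ∩ D ≠ ∅)` is countably
subadditive and continuous along decreasing sequences with empty intersection. Hence the
measurable sets `A` squeezed between an `ℰ_int`-set (or `∅`) and an `ℰ_σ`-set (or `univ`) with
arbitrarily small hitting probability of the gap form a σ-algebra. It contains `ℰ`, because every
`ℰ`-set is a countable union of `ℰ_int`-sets, so it contains every measurable set. A constructive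
random set is the increasing union of the finite random sets `π_0 ∪ ⋯ ∪ π_n`, and its hitting
probabilities are the suprema of theirs.
-/

open Set
open scoped ENNReal Topology

section HitEvent

variable {Ω S : Type*}

def hitEvent (ρ : Ω → Set S) (D : Set S) : Set Ω := {ω | (ρ ω ∩ D).Nonempty}

lemma hitEvent_mono (ρ : Ω → Set S) {D₁ D₂ : Set S} (h : D₁ ⊆ D₂) :
    hitEvent ρ D₁ ⊆ hitEvent ρ D₂ :=
  fun _ hω => hω.mono (inter_subset_inter_right _ h)

lemma hitEvent_mono_left {ρ σ : Ω → Set S} (h : ∀ ω, ρ ω ⊆ σ ω) (D : Set S) :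
    hitEvent ρ D ⊆ hitEvent σ D :=
  fun ω hω => hω.mono (inter_subset_inter_left _ (h ω))

@[simp]
lemma hitEvent_empty (ρ : Ω → Set S) : hitEvent ρ ∅ = ∅ := by
  simp [hitEvent]

lemma hitEvent_union (ρ : Ω → Set S) (D₁ D₂ : Set S) :
    hitEvent ρ (D₁ ∪ D₂) = hitEvent ρ D₁ ∪ hitEvent ρ D₂ := by
  ext ω
  simp [hitEvent, inter_union_distrib_left]

lemma hitEvent_iUnion {ι : Sort*} (ρ : Ω → Set S) (D : ι → Set S) :
    hitEvent ρ (⋃ i, D i) = ⋃ i, hitEvent ρ (D i) := by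
  ext ω
  simp [hitEvent, inter_iUnion]

lemma hitEvent_iUnion_left {ι : Sort*} (ρ : ι → Ω → Set S) (D : Set S) :
    hitEvent (fun ω => ⋃ i, ρ i ω) D = ⋃ i, hitEvent (ρ i) D := by
  ext ω
  simp [hitEvent, iUnion_inter]

lemma hitEvent_accumulate_left (ρ : ℕ → Ω → Set S) (D : Set S) (n : ℕ) :
    hitEvent (fun ω => accumulate (ρ · ω) n) D = accumulate (fun k => hitEvent (ρ k) D) n := by
  simp only [accumulate_def, hitEvent_iUnion_left]

lemma iInter_hitEvent_of_antitone {ρ : Ω → Set S} (hfin : ∀ ω, (ρ ω).Finite) {D : ℕ → Set S}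
    (hD : Antitone D) : ⋂ n, hitEvent ρ (D n) = hitEvent ρ (⋂ n, D n) := by
  refine Subset.antisymm (fun ω hω => ?_)
    (subset_iInter fun n => hitEvent_mono ρ (iInter_subset D n))
  by_contra hmiss
  have hcover : ((hfin ω).toFinset : Set S) ⊆ ⋃ n, (D n)ᶜ := by
    intro x hx
    by_contra! hx'
    simp only [mem_iUnion, mem_compl_iff, not_exists, not_not] at hx'
    exact hmiss ⟨x, (hfin ω).mem_toFinset.1 hx, mem_iInter.2 hx'⟩
  have hdir : Directed (· ⊆ ·) fun n => (D n)ᶜ :=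
    Monotone.directed_le fun _ _ h => compl_subset_compl.2 (hD h)
  obtain ⟨n, hn⟩ := hdir.exists_mem_subset_of_finset_subset_biUnion hcover
  obtain ⟨x, hxρ, hxD⟩ := mem_iInter.1 hω n
  exact hn (by simpa using hxρ) hxD

end HitEvent

section Measure

variable {Ω S : Type*} [MeasurableSpace Ω] {P : Measure Ω}

lemma measure_hitEvent_iUnion_of_monotone {ρ : ℕ → Ω → Set S} (hρ : Monotone ρ) (D : Set S) :
    P (hitEvent (fun ω => ⋃ n, ρ n ω) D) = ⨆ n, P (hitEvent (ρ n) D) := by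
  rw [hitEvent_iUnion_left]
  exact Monotone.measure_iUnion fun _ _ h => hitEvent_mono_left (hρ h) D

lemma tendsto_measure_hitEvent_of_antitone [IsFiniteMeasure P] {ρ : Ω → Set S}
    (hfin : ∀ ω, (ρ ω).Finite) {D : ℕ → Set S} (hD : Antitone D) (hempty : ⋂ n, D n = ∅)
    (hmeas : ∀ n, MeasurableSet (hitEvent ρ (D n))) :
    Tendsto (fun n => P (hitEvent ρ (D n))) atTop (𝓝 0) := by
  have h := tendsto_measure_iInter_atTop (μ := P) (fun n => (hmeas n).nullMeasurableSet)
    (fun _ _ h => hitEvent_mono ρ (hD h)) ⟨0, measure_ne_top P _⟩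
  rwa [iInter_hitEvent_of_antitone hfin hD, hempty, hitEvent_empty, measure_empty] at h

lemma exists_measure_hitEvent_iUnion_diff_accumulate_lt [MeasurableSpace S] [IsFiniteMeasure P]
    {ρ : Ω → Set S} (hfin : ∀ ω, (ρ ω).Finite)
    (hρ : ∀ D, MeasurableSet D → MeasurableSet (hitEvent ρ D))
    {A : ℕ → Set S} (hA : ∀ n, MeasurableSet (A n)) {ε : ℝ≥0∞} (hε : 0 < ε) :
    ∃ N, P (hitEvent ρ ((⋃ n, A n) \ accumulate A N)) < ε := by
  have hanti : Antitone fun N => (⋃ n, A n) \ accumulate A N :=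
    fun _ _ h => sdiff_subset_sdiff_right (monotone_accumulate h)
  have hempty : ⋂ N, (⋃ n, A n) \ accumulate A N = ∅ := by
    rw [← sdiff_iUnion, iUnion_accumulate, sdiff_self]
  have hmeas N : MeasurableSet (hitEvent ρ ((⋃ n, A n) \ accumulate A N)) :=
    hρ _ ((MeasurableSet.iUnion hA).diff (MeasurableSet.biUnion (to_countable _) fun n _ => hA n))
  have h := tendsto_measure_hitEvent_of_antitone (P := P) hfin hanti hempty hmeas
  exact (h.eventually_lt_const hε).exists

end Measure

section SetClasses

variable {S : Type*} {E : Set (Set S)}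

lemma mem_Eint_iff_compl_mem_Esigma {F : Set S} : F ∈ Eint E ↔ Fᶜ ∈ Esigma E := by
  constructor
  · rintro ⟨f, hf, rfl⟩
    exact ⟨f, hf, by simp only [compl_iInter, compl_compl]⟩
  · rintro ⟨f, hf, hF⟩
    exact ⟨f, hf, by rw [← compl_compl F, hF, compl_iUnion]⟩

lemma mem_Esigma_of_mem {A : Set S} (hA : A ∈ E) : A ∈ Esigma E :=
  ⟨fun _ => A, fun _ => hA, (iUnion_const A).symm⟩

lemma iUnion_mem_Esigma {G : ℕ → Set S} (hG : ∀ n, G n ∈ Esigma E) : ⋃ n, G n ∈ Esigma E := by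
  choose g hg hG using hG
  refine ⟨fun m => g m.unpair.1 m.unpair.2, fun m => hg _ _, ?_⟩
  rw [iUnion_unpair g]
  exact iUnion_congr hG

lemma inter_mem_Esigma (hstable : ∀ A ∈ E, ∀ B ∈ E, A ∩ B ∈ E) {G₁ G₂ : Set S}
    (h₁ : G₁ ∈ Esigma E) (h₂ : G₂ ∈ Esigma E) : G₁ ∩ G₂ ∈ Esigma E := by
  obtain ⟨f, hf, rfl⟩ := h₁
  obtain ⟨g, hg, rfl⟩ := h₂
  refine ⟨fun m => f m.unpair.1 ∩ g m.unpair.2, fun m => hstable _ (hf _) _ (hg _), ?_⟩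
  rw [iUnion_inter_iUnion, ← iUnion_unpair (fun i j => f i ∩ g j)]

lemma mem_insert_empty_Eint_iff_compl {F : Set S} :
    F ∈ insert ∅ (Eint E) ↔ Fᶜ ∈ insert univ (Esigma E) := by
  simp only [mem_insert_iff, mem_Eint_iff_compl_mem_Esigma, compl_univ_iff]

lemma iUnion_mem_insert_univ_Esigma {G : ℕ → Set S} (hG : ∀ n, G n ∈ insert univ (Esigma E)) :
    ⋃ n, G n ∈ insert univ (Esigma E) := by
  by_cases huniv : ∃ n, G n = univ
  · obtain ⟨n, hn⟩ := huniv
    exact Or.inl (univ_subset_iff.1 (hn ▸ subset_iUnion G n))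
  · push Not at huniv
    exact Or.inr (iUnion_mem_Esigma fun n => (hG n).resolve_left (huniv n))

lemma accumulate_mem_insert_empty_Eint (hstable : ∀ A ∈ E, ∀ B ∈ E, A ∩ B ∈ E) {F : ℕ → Set S}
    (hF : ∀ n, F n ∈ insert ∅ (Eint E)) (N : ℕ) : accumulate F N ∈ insert ∅ (Eint E) := by
  induction N with
  | zero => simpa using hF 0
  | succ N ih =>
    rw [mem_insert_empty_Eint_iff_compl] at ih ⊢
    rw [accumulate_succ, compl_union]
    rcases ih with ih | ih <;>
      rcases mem_insert_empty_Eint_iff_compl.1 (hF (N + 1)) with h | h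
    · simp [ih, h]
    · simpa [ih] using Or.inr h
    · simpa [h] using Or.inr ih
    · exact Or.inr (inter_mem_Esigma hstable ih h)

end SetClasses

section HitApprox

variable {Ω S : Type*} [MeasurableSpace Ω] {P : Measure Ω} {ρ : Ω → Set S} {E : Set (Set S)}

/-- Inner approximants are finite unions of `ℰ_int`-sets, the empty one included, hence
`insert ∅ (Eint E)`; admitting `univ` as outer approximant makes the notion closed under
complements. -/
def HitApprox (P : Measure Ω) (ρ : Ω → Set S) (E : Set (Set S)) (A : Set S) : Prop :=
  ∀ ε > 0, ∃ F ∈ insert ∅ (Eint E), ∃ G ∈ insert univ (Esigma E),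
    F ⊆ A ∧ A ⊆ G ∧ P (hitEvent ρ (G \ F)) < ε

lemma hitApprox_empty (hempty : ∅ ∈ E) : HitApprox P ρ E ∅ :=
  fun _ hε => ⟨∅, Or.inl rfl, ∅, Or.inr (mem_Esigma_of_mem hempty), subset_rfl, subset_rfl,
    by simpa using hε⟩

lemma HitApprox.compl {A : Set S} (h : HitApprox P ρ E A) : HitApprox P ρ E Aᶜ := by
  intro ε hε
  obtain ⟨F, hF, G, hG, hFA, hAG, hlt⟩ := h ε hε
  refine ⟨Gᶜ, mem_insert_empty_Eint_iff_compl.2 (by rwa [compl_compl]), Fᶜ,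
    mem_insert_empty_Eint_iff_compl.1 hF, compl_subset_compl.2 hAG, compl_subset_compl.2 hFA, ?_⟩
  rwa [compl_sdiff_compl]

lemma HitApprox.iUnion [MeasurableSpace S] [IsFiniteMeasure P]
    (hstable : ∀ A ∈ E, ∀ B ∈ E, A ∩ B ∈ E) (hfin : ∀ ω, (ρ ω).Finite)
    (hρ : ∀ D, MeasurableSet D → MeasurableSet (hitEvent ρ D))
    {A : ℕ → Set S} (hA : ∀ n, MeasurableSet (A n)) (h : ∀ n, HitApprox P ρ E (A n)) :
    HitApprox P ρ E (⋃ n, A n) := by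
  intro ε hε
  obtain ⟨N, hN⟩ :=
    exists_measure_hitEvent_iUnion_diff_accumulate_lt (P := P) hfin hρ hA (ENNReal.half_pos hε.ne')
  obtain ⟨δ, hδ, hδsum⟩ := ENNReal.exists_pos_sum_of_countable (ENNReal.half_pos hε.ne').ne' ℕ
  choose F hF G hG hFA hAG hlt using fun n => h n (δ n) (ENNReal.coe_pos.2 (hδ n))
  refine ⟨accumulate F N, accumulate_mem_insert_empty_Eint hstable hF N, ⋃ n, G n,
    iUnion_mem_insert_univ_Esigma hG, ?_, iUnion_mono hAG, ?_⟩
  · exact (biUnion_mono subset_rfl fun n _ => hFA n).trans (accumulate_subset_iUnion N)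
  · have hsub :
        (⋃ n, G n) \ accumulate F N ⊆ ((⋃ n, A n) \ accumulate A N) ∪ ⋃ n, G n \ F n := by
      rintro x ⟨hxG, hxF⟩
      by_cases hxAN : x ∈ accumulate A N
      · obtain ⟨m, hmN, hxm⟩ := mem_accumulate.1 hxAN
        exact Or.inr (mem_iUnion.2
          ⟨m, hAG m hxm, fun hxFm => hxF (mem_accumulate.2 ⟨m, hmN, hxFm⟩)⟩)
      by_cases hxA : x ∈ ⋃ n, A n
      · exact Or.inl ⟨hxA, hxAN⟩
      obtain ⟨n, hxn⟩ := mem_iUnion.1 hxG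
      exact Or.inr (mem_iUnion.2 ⟨n, hxn, fun hxFn => hxA (mem_iUnion.2 ⟨n, hFA n hxFn⟩)⟩)
    calc P (hitEvent ρ ((⋃ n, G n) \ accumulate F N))
        ≤ P (hitEvent ρ ((⋃ n, A n) \ accumulate A N)) + ∑' n, P (hitEvent ρ (G n \ F n)) := by
          grw [hitEvent_mono ρ hsub, hitEvent_union, measure_union_le, hitEvent_iUnion,
            measure_iUnion_le]
      _ < ε / 2 + ε / 2 :=
          ENNReal.add_lt_add hN ((ENNReal.tsum_le_tsum fun n => (hlt n).le).trans_lt hδsum)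
      _ = ε := ENNReal.add_halves ε

lemma HitApprox.measure_le_iSup {σ : Ω → Set S} (hρσ : ∀ ω, ρ ω ⊆ σ ω) {A : Set S}
    (h : HitApprox P ρ E A) :
    P (hitEvent ρ A) ≤ ⨆ (F : Set S) (_ : F ∈ Eint E) (_ : F ⊆ A), P (hitEvent σ F) := by
  refine ENNReal.le_of_forall_pos_le_add fun ε hε _ => ?_
  obtain ⟨F, hF, G, -, hFA, hAG, hlt⟩ := h ε (ENNReal.coe_pos.2 hε)
  have hF_le : P (hitEvent ρ F) ≤ ⨆ (F : Set S) (_ : F ∈ Eint E) (_ : F ⊆ A), P (hitEvent σ F) := by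
    rcases hF with rfl | hF
    · simp
    · exact le_iSup₂_of_le F hF (le_iSup_of_le hFA (measure_mono (hitEvent_mono_left hρσ F)))
  have hsplit : A ⊆ F ∪ G \ F := by
    rw [union_sdiff_self]
    exact hAG.trans subset_union_right
  calc P (hitEvent ρ A) ≤ P (hitEvent ρ F) + P (hitEvent ρ (G \ F)) := by
        grw [hitEvent_mono ρ hsplit, hitEvent_union, measure_union_le]
    _ ≤ _ := add_le_add hF_le hlt.le

end HitApprox

section Regularity

variable {Ω S : Type*} [MeasurableSpace Ω] [mS : MeasurableSpace S] {P : Measure Ω}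
  {ρ : Ω → Set S} {E : Set (Set S)}

lemma measurableSet_of_mem_Eint (hgen : MeasurableSpace.generateFrom E = mS) {F : Set S}
    (hF : F ∈ Eint E) : MeasurableSet F := by
  obtain ⟨f, hf, rfl⟩ := hF
  exact .iInter fun n => (hgen ▸ MeasurableSpace.measurableSet_generateFrom (hf n)).compl

lemma hitApprox_of_mem [IsFiniteMeasure P] (hstable : ∀ A ∈ E, ∀ B ∈ E, A ∩ B ∈ E)
    (hgen : MeasurableSpace.generateFrom E = mS)
    (hempty : ∅ ∈ E) (hEint : ∀ A ∈ E, ∃ U ⊆ Eint E, U.Countable ∧ A = ⋃₀ U)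
    (hfin : ∀ ω, (ρ ω).Finite) (hρ : ∀ D, MeasurableSet D → MeasurableSet (hitEvent ρ D))
    {A : Set S} (hA : A ∈ E) : HitApprox P ρ E A := by
  obtain ⟨U, hUE, hUc, rfl⟩ := hEint A hA
  rcases U.eq_empty_or_nonempty with rfl | hU
  · simpa using hitApprox_empty hempty
  obtain ⟨f, rfl⟩ := hUc.exists_eq_range hU
  have hf n : f n ∈ Eint E := hUE (mem_range_self n)
  rw [sUnion_range] at hA ⊢
  intro ε hε
  obtain ⟨N, hN⟩ := exists_measure_hitEvent_iUnion_diff_accumulate_lt (P := P) hfin hρ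
    (fun n => measurableSet_of_mem_Eint hgen (hf n)) hε
  exact ⟨accumulate f N, accumulate_mem_insert_empty_Eint hstable (fun n => Or.inr (hf n)) N,
    ⋃ n, f n, Or.inr (mem_Esigma_of_mem hA), accumulate_subset_iUnion N, subset_rfl, hN⟩

lemma hitApprox_of_measurableSet [IsFiniteMeasure P] (hstable : ∀ A ∈ E, ∀ B ∈ E, A ∩ B ∈ E)
    (hgen : MeasurableSpace.generateFrom E = mS) (hempty : ∅ ∈ E)
    (hEint : ∀ A ∈ E, ∃ U ⊆ Eint E, U.Countable ∧ A = ⋃₀ U)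
    (hfin : ∀ ω, (ρ ω).Finite) (hρ : ∀ D, MeasurableSet D → MeasurableSet (hitEvent ρ D))
    {A : Set S} (hA : MeasurableSet A) : HitApprox P ρ E A := by
  rw [← hgen] at hA
  induction A, hA using MeasurableSpace.generateFrom_induction with
  | hC A hA _ => exact hitApprox_of_mem hstable hgen hempty hEint hfin hρ hA
  | empty => exact hitApprox_empty hempty
  | compl A _ h => exact h.compl
  | iUnion A hA h => exact .iUnion hstable hfin hρ (fun n => hgen ▸ hA n) h

end Regularity

section Constructive

variable {Ω S : Type*} [MeasurableSpace Ω] [MeasurableSpace S]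

lemma measurableSet_hitEvent_of_measurable {π : Ω → CS S}
    (hπ : Measurable[_, countingSigmaField S] π) {D : Set S} (hD : MeasurableSet D) :
    MeasurableSet (hitEvent (fun ω => (π ω).1) D) := by
  have hhit : {M : CS S | (M.1 ∩ D).Nonempty} = NA D ⁻¹' {0}ᶜ := by
    ext M
    simp [NA, nonempty_iff_ne_empty]
  have hle : MeasurableSpace.comap (NA D) ⊤ ≤ countingSigmaField S :=
    le_iSup₂_of_le (f := fun A _ => MeasurableSpace.comap (NA A) ⊤) D hD le_rfl
  have hmeas : MeasurableSet[countingSigmaField S] {M : CS S | (M.1 ∩ D).Nonempty} :=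
    hle _ (hhit ▸ ⟨{0}ᶜ, trivial, rfl⟩)
  exact hπ hmeas

lemma Constructive.exists_monotone_finite {π : Ω → CS S} (hπ : Constructive π) :
    ∃ ρ : ℕ → Ω → Set S, Monotone ρ ∧ (∀ n ω, (ρ n ω).Finite) ∧
      (∀ n D, MeasurableSet D → MeasurableSet (hitEvent (ρ n) D)) ∧
      ∀ ω, (π ω).1 = ⋃ n, ρ n ω := by
  obtain ⟨πk, hπk, hπ⟩ := hπ
  refine ⟨fun n ω => accumulate (fun k => (πk k ω).1) n, fun _ _ h ω => monotone_accumulate h,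
    fun n ω => ?_, fun n D hD => ?_, fun ω => by rw [hπ ω, iUnion_accumulate]⟩
  · exact (finite_le_nat n).biUnion fun k _ => (hπk k).2 ω
  · rw [hitEvent_accumulate_left]
    exact .biUnion (to_countable _) fun k _ => measurableSet_hitEvent_of_measurable (hπk k).1 hD

end Constructive

theorem hittingFunction_inner_regular_of_constructive_general {Ω S : Type*}
    [MeasurableSpace Ω] [MeasurableSpace S]
    (P : Measure Ω) [IsProbabilityMeasure P]
    (E : Set (Set S))
    (hstable : ∀ A ∈ E, ∀ B ∈ E, A ∩ B ∈ E)
    (hgen : MeasurableSpace.generateFrom E = ‹MeasurableSpace S›)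
    (hempty : ∅ ∈ E)
    (hEint : ∀ A ∈ E, ∃ U ⊆ Eint E, U.Countable ∧ A = ⋃₀ U)
    (π : Ω → CS S)
    (hc : Constructive π) :
    ∀ A : Set S, MeasurableSet A →
      P {ω | ((π ω).1 ∩ A).Nonempty} =
        ⨆ (F : Set S) (_ : F ∈ Eint E) (_ : F ⊆ A), P {ω | ((π ω).1 ∩ F).Nonempty} := by
  obtain ⟨ρ, hρ_mono, hρ_fin, hρ_meas, hπρ⟩ := hc.exists_monotone_finite
  intro A hA
  refine le_antisymm ?_ (iSup₂_le fun F _ => iSup_le fun hFA => measure_mono (hitEvent_mono _ hFA))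
  have hπ_eq : (fun ω => (π ω).1) = fun ω => ⋃ n, ρ n ω := funext hπρ
  change P (hitEvent (fun ω => (π ω).1) A) ≤ _
  rw [hπ_eq, measure_hitEvent_iUnion_of_monotone hρ_mono]
  refine iSup_le fun n => ?_
  have hρπ ω : ρ n ω ⊆ (π ω).1 := hπρ ω ▸ subset_iUnion (ρ · ω) n
  have hApprox : HitApprox P (ρ n) E A :=
    hitApprox_of_measurableSet hstable hgen hempty hEint (hρ_fin n) (hρ_meas n) hA
  exact hApprox.measure_le_iSup hρπ

theorem hittingFunction_inner_regular_of_constructive {Ω S : Type*}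
    [MeasurableSpace Ω] [MeasurableSpace S]
    (P : Measure Ω) [IsProbabilityMeasure P]
    (E : Set (Set S))
    (hstable : ∀ A ∈ E, ∀ B ∈ E, A ∩ B ∈ E)
    (hgen : MeasurableSpace.generateFrom E = ‹MeasurableSpace S›)
    (hempty : ∅ ∈ E)
    (hEint : ∀ A ∈ E, ∃ U ⊆ Eint E, U.Countable ∧ A = ⋃₀ U)
    (π : Ω → CS S)
    (hm : @Measurable Ω (CS S) _ (countingSigmaField S) π)
    (hc : Constructive π) :
    ∀ A : Set S, MeasurableSet A →
      P {ω | ((π ω).1 ∩ A).Nonempty} =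
        ⨆ (F : Set S) (_ : F ∈ Eint E) (_ : F ⊆ A), P {ω | ((π ω).1 ∩ F).Nonempty} :=
  hittingFunction_inner_regular_of_constructive_general P E hstable hgen hempty hEint π hc
end
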